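/- Let f_W be an n-layer ReLU network with weight matrices W_1, …, W_n, each nonzero, and let U_1, …, U_n be matrices of the same respective dimensions satisfying ‖U_l‖₂ ≤ (1/n)·‖W_l‖₂ for every l. Let B > 0 and let x be an input with ‖x‖₂ ≤ B. Then for all output indices i, j, | M(f_{W+U}(x), i, j) − M(f_W(x), i, j) | ≤ 2e · B · (∏_{l=1}^{n} ‖W_l‖₂) · Σ_{l=1}^{n} ‖U_l‖₂ / ‖W_l‖₂. -/

import Mathlib

open Matrix

/-- The spectral norm of a real matrix: its operator norm as a map between
Euclidean (`ℓ²`) spaces. -/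
noncomputable def specNorm {m k : ℕ} (A : Matrix (Fin m) (Fin k) ℝ) : ℝ :=
  ‖LinearMap.toContinuousLinearMap (Matrix.toEuclideanLin A)‖

/-- The Euclidean (`ℓ²`) norm of a vector in `ℝ^k`. -/
noncomputable def vnorm {k : ℕ} (v : Fin k → ℝ) : ℝ :=
  Real.sqrt (∑ i, (v i) ^ 2)

/-- Coordinatewise ReLU activation. -/
def relu {k : ℕ} (v : Fin k → ℝ) : Fin k → ℝ := fun i => max (v i) 0

/-- `actStack n d W x = act(W_n · act(W_{n-1} · ⋯ · act(W_1 · x)))`: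
the activated output after `n` layers (activation applied after every layer). -/
def actStack : (n : ℕ) → (d : Fin (n + 1) → ℕ) →
    ((l : Fin n) → Matrix (Fin (d l.succ)) (Fin (d l.castSucc)) ℝ) →
    (Fin (d 0) → ℝ) → (Fin (d (Fin.last n)) → ℝ)
  | 0, _, _, x => x
  | n + 1, d, W, x =>
      relu ((W (Fin.last n)) *ᵥ
        actStack n (fun l => d l.castSucc) (fun l => W l.castSucc) x)

/-- The `n`-layer ReLU network with weight matrices `W_1, …, W_n`:
`f_W(x) = W_n · act(W_{n-1} · ⋯ · act(W_1 · x) ⋯)` (no activation on the last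
layer). For `n = 0` it is the identity. -/
def reluNet : (n : ℕ) → (d : Fin (n + 1) → ℕ) →
    ((l : Fin n) → Matrix (Fin (d l.succ)) (Fin (d l.castSucc)) ℝ) →
    (Fin (d 0) → ℝ) → (Fin (d (Fin.last n)) → ℝ)
  | 0, _, _, x => x
  | n + 1, d, W, x =>
      (W (Fin.last n)) *ᵥ
        actStack n (fun l => d l.castSucc) (fun l => W l.castSucc) x

/-! Writing `‖U_l‖₂ = t_l ‖W_l‖₂`, the perturbed and unperturbed networks drift apart by at most
`(∏ (‖W_l‖₂ + ‖U_l‖₂) - ∏ ‖W_l‖₂) ‖x‖₂ = (∏ (1 + t_l) - 1) ∏ ‖W_l‖₂ ‖x‖₂`: at each layer the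
difference is multiplied by `‖W_l + U_l‖₂` and gains `‖U_l‖₂` times the size of the unperturbed
activation, while ReLU is `1`-Lipschitz. Since `∑ t_l ≤ 1`, we have
`∏ (1 + t_l) - 1 ≤ exp (∑ t_l) - 1 ≤ e ∑ t_l`, and a margin is at most twice the
distance of the outputs. -/

lemma vnorm_eq_norm {k : ℕ} (v : Fin k → ℝ) : vnorm v = ‖WithLp.toLp 2 v‖ := by
  simp [vnorm, EuclideanSpace.norm_eq, Real.norm_eq_abs, sq_abs]

lemma vnorm_nonneg {k : ℕ} (v : Fin k → ℝ) : 0 ≤ vnorm v := Real.sqrt_nonneg _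

lemma vnorm_add_le {k : ℕ} (u v : Fin k → ℝ) : vnorm (u + v) ≤ vnorm u + vnorm v := by
  simpa only [vnorm_eq_norm, WithLp.toLp_add] using norm_add_le _ _

lemma vnorm_le_vnorm_of_abs_le {k : ℕ} {u v : Fin k → ℝ} (h : ∀ i, |u i| ≤ |v i|) :
    vnorm u ≤ vnorm v :=
  Real.sqrt_le_sqrt <| Finset.sum_le_sum fun i _ => sq_le_sq.mpr (h i)

lemma abs_apply_le_vnorm {k : ℕ} (v : Fin k → ℝ) (i : Fin k) : |v i| ≤ vnorm v := by
  rw [vnorm, ← Real.sqrt_sq_eq_abs]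
  exact Real.sqrt_le_sqrt (Finset.single_le_sum (fun j _ => sq_nonneg (v j)) (Finset.mem_univ i))

lemma vnorm_relu_le {k : ℕ} (v : Fin k → ℝ) : vnorm (relu v) ≤ vnorm v :=
  vnorm_le_vnorm_of_abs_le fun i => by
    rw [relu, abs_of_nonneg (le_max_right _ _)]
    exact max_le (le_abs_self _) (abs_nonneg _)

lemma vnorm_relu_sub_relu_le {k : ℕ} (u v : Fin k → ℝ) :
    vnorm (relu u - relu v) ≤ vnorm (u - v) :=
  vnorm_le_vnorm_of_abs_le fun _ => abs_max_sub_max_le_abs _ _ _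

lemma specNorm_nonneg {m k : ℕ} (A : Matrix (Fin m) (Fin k) ℝ) : 0 ≤ specNorm A :=
  norm_nonneg _

lemma specNorm_add_le {m k : ℕ} (A B : Matrix (Fin m) (Fin k) ℝ) :
    specNorm (A + B) ≤ specNorm A + specNorm B := by
  simpa only [specNorm, map_add] using norm_add_le _ _

lemma vnorm_mulVec_le {m k : ℕ} (A : Matrix (Fin m) (Fin k) ℝ) (v : Fin k → ℝ) :
    vnorm (A *ᵥ v) ≤ specNorm A * vnorm v := by
  rw [vnorm_eq_norm, vnorm_eq_norm]
  exact (LinearMap.toContinuousLinearMap (Matrix.toEuclideanLin A)).le_opNorm (WithLp.toLp 2 v)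

-- The inductive step, with `P = ∏ ‖W_l‖` and `Q = ∏ (‖W_l‖ + ‖U_l‖)` over the earlier layers.
lemma vnorm_add_mulVec_sub_mulVec_le {m k : ℕ} (A E : Matrix (Fin m) (Fin k) ℝ)
    {u v : Fin k → ℝ} {P Q X : ℝ} (hu : vnorm u ≤ P * X) (huv : vnorm (v - u) ≤ (Q - P) * X) :
    vnorm ((A + E) *ᵥ v - A *ᵥ u) ≤ (Q * (specNorm A + specNorm E) - P * specNorm A) * X := by
  have hsplit : (A + E) *ᵥ v - A *ᵥ u = (A + E) *ᵥ (v - u) + E *ᵥ u := by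
    rw [Matrix.mulVec_sub, Matrix.add_mulVec, Matrix.add_mulVec]; abel
  have hAE : specNorm (A + E) * vnorm (v - u) ≤ (specNorm A + specNorm E) * ((Q - P) * X) :=
    mul_le_mul (specNorm_add_le A E) huv (vnorm_nonneg _)
      (add_nonneg (specNorm_nonneg A) (specNorm_nonneg E))
  have hE : specNorm E * vnorm u ≤ specNorm E * (P * X) :=
    mul_le_mul_of_nonneg_left hu (specNorm_nonneg E)
  calc vnorm ((A + E) *ᵥ v - A *ᵥ u)
      ≤ vnorm ((A + E) *ᵥ (v - u)) + vnorm (E *ᵥ u) := hsplit ▸ vnorm_add_le _ _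
    _ ≤ specNorm (A + E) * vnorm (v - u) + specNorm E * vnorm u :=
        add_le_add (vnorm_mulVec_le _ _) (vnorm_mulVec_le _ _)
    _ ≤ (Q * (specNorm A + specNorm E) - P * specNorm A) * X := by linarith

lemma vnorm_actStack_le : ∀ (n : ℕ) (d : Fin (n + 1) → ℕ)
    (W : (l : Fin n) → Matrix (Fin (d l.succ)) (Fin (d l.castSucc)) ℝ) (x : Fin (d 0) → ℝ),
    vnorm (actStack n d W x) ≤ (∏ l, specNorm (W l)) * vnorm x
  | 0, d, W, x => by simp [actStack]
  | n + 1, d, W, x => by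
    have ih := vnorm_actStack_le n (fun l => d l.castSucc) (fun l => W l.castSucc) x
    rw [actStack, Fin.prod_univ_castSucc]
    calc _ ≤ specNorm (W (Fin.last n)) *
          vnorm (actStack n (fun l => d l.castSucc) (fun l => W l.castSucc) x) :=
          (vnorm_relu_le _).trans (vnorm_mulVec_le _ _)
      _ ≤ _ := by
          rw [mul_comm _ (specNorm _), mul_assoc]
          exact mul_le_mul_of_nonneg_left ih (specNorm_nonneg _)

lemma vnorm_actStack_add_sub_le : ∀ (n : ℕ) (d : Fin (n + 1) → ℕ)
    (W U : (l : Fin n) → Matrix (Fin (d l.succ)) (Fin (d l.castSucc)) ℝ) (x : Fin (d 0) → ℝ),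
    vnorm (actStack n d (fun l => W l + U l) x - actStack n d W x) ≤
      (∏ l, (specNorm (W l) + specNorm (U l)) - ∏ l, specNorm (W l)) * vnorm x
  | 0, d, W, U, x => by simp [actStack, vnorm]
  | n + 1, d, W, U, x => by
    have ih := vnorm_actStack_add_sub_le n (fun l => d l.castSucc)
      (fun l => W l.castSucc) (fun l => U l.castSucc) x
    rw [actStack, actStack, Fin.prod_univ_castSucc, Fin.prod_univ_castSucc]
    exact (vnorm_relu_sub_relu_le _ _).trans <|
      vnorm_add_mulVec_sub_mulVec_le (W (Fin.last n)) (U (Fin.last n))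
        (vnorm_actStack_le n (fun l => d l.castSucc) (fun l => W l.castSucc) x) ih

lemma vnorm_reluNet_add_sub_le (n : ℕ) (d : Fin (n + 1) → ℕ)
    (W U : (l : Fin n) → Matrix (Fin (d l.succ)) (Fin (d l.castSucc)) ℝ) (x : Fin (d 0) → ℝ) :
    vnorm (reluNet n d (fun l => W l + U l) x - reluNet n d W x) ≤
      (∏ l, (specNorm (W l) + specNorm (U l)) - ∏ l, specNorm (W l)) * vnorm x := by
  cases n with
  | zero => simp [reluNet, vnorm]
  | succ n =>
    have hdiff := vnorm_actStack_add_sub_le n (fun l => d l.castSucc)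
      (fun l => W l.castSucc) (fun l => U l.castSucc) x
    rw [reluNet, reluNet, Fin.prod_univ_castSucc, Fin.prod_univ_castSucc]
    exact vnorm_add_mulVec_sub_mulVec_le (W (Fin.last n)) (U (Fin.last n))
      (vnorm_actStack_le n (fun l => d l.castSucc) (fun l => W l.castSucc) x) hdiff

lemma abs_sub_sub_sub_le_two_mul_vnorm {k : ℕ} (v w : Fin k → ℝ) (i j : Fin k) :
    |(v i - v j) - (w i - w j)| ≤ 2 * vnorm (v - w) := by
  have hi := abs_apply_le_vnorm (v - w) i
  have hj := abs_apply_le_vnorm (v - w) j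
  calc |(v i - v j) - (w i - w j)| = |(v - w) i - (v - w) j| := by
        simp only [Pi.sub_apply]; congr 1; ring
    _ ≤ |(v - w) i| + |(v - w) j| := abs_sub _ _
    _ ≤ 2 * vnorm (v - w) := by linarith

lemma prod_one_add_sub_one_le {ι : Type*} [Fintype ι] (t : ι → ℝ) (ht : ∀ i, 0 ≤ t i)
    (hsum : ∑ i, t i ≤ 1) : ∏ i, (1 + t i) - 1 ≤ Real.exp 1 * ∑ i, t i := by
  set s := ∑ i, t i
  -- `exp s - 1 ≤ s exp s` is `1 - s ≤ exp (-s)` multiplied by `exp s`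
  have hexp : Real.exp s - 1 ≤ s * Real.exp s := by
    have := mul_le_mul_of_nonneg_left (Real.one_sub_le_exp_neg s) (Real.exp_pos s).le
    rw [← Real.exp_add, add_neg_cancel, Real.exp_zero] at this
    linarith
  have hs : 0 ≤ s := Finset.sum_nonneg fun i _ => ht i
  calc ∏ i, (1 + t i) - 1 ≤ Real.exp s - 1 := by
        linarith [Real.prod_one_add_le_exp_sum Finset.univ ht]
    _ ≤ s * Real.exp s := hexp
    _ ≤ Real.exp 1 * s := by
        rw [mul_comm]; exact mul_le_mul_of_nonneg_right (Real.exp_le_exp.mpr hsum) hs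

lemma prod_add_sub_prod_le {ι : Type*} [Fintype ι] (a b : ι → ℝ) (ha : ∀ i, 0 ≤ a i)
    (hb : ∀ i, 0 ≤ b i) (hba : ∀ i, b i ≤ 1 / (Fintype.card ι : ℝ) * a i) :
    ∏ i, (a i + b i) - ∏ i, a i ≤ Real.exp 1 * (∏ i, a i) * ∑ i, b i / a i := by
  have hfactor : ∀ i, a i + b i = a i * (1 + b i / a i) := by
    intro i
    rcases (ha i).eq_or_lt with hai | hai
    · -- `b i / 0 = 0`, but then also `b i = 0`
      have : b i = 0 := le_antisymm (by simpa [← hai] using hba i) (hb i)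
      simp [← hai, this]
    · field_simp
  have hratio : ∀ i, b i / a i ≤ 1 / (Fintype.card ι : ℝ) := fun i =>
    div_le_of_le_mul₀ (ha i) (by positivity) (hba i)
  have hsum : ∑ i, b i / a i ≤ 1 :=
    calc ∑ i, b i / a i ≤ Fintype.card ι • (1 / (Fintype.card ι : ℝ)) :=
          Finset.sum_le_card_nsmul _ _ _ fun i _ => hratio i
      _ ≤ 1 := by rw [nsmul_eq_mul, mul_one_div]; exact div_self_le_one _
  have key := prod_one_add_sub_one_le (fun i => b i / a i)
    (fun i => div_nonneg (hb i) (ha i)) hsum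
  calc ∏ i, (a i + b i) - ∏ i, a i = (∏ i, a i) * (∏ i, (1 + b i / a i) - 1) := by
        simp only [hfactor, Finset.prod_mul_distrib]; ring
    _ ≤ (∏ i, a i) * (Real.exp 1 * ∑ i, b i / a i) :=
        mul_le_mul_of_nonneg_left key (Finset.prod_nonneg fun i _ => ha i)
    _ = Real.exp 1 * (∏ i, a i) * ∑ i, b i / a i := by ring

theorem margin_reluNet_perturb_le_general {n : ℕ} (d : Fin (n + 1) → ℕ)
    (W U : (l : Fin n) → Matrix (Fin (d l.succ)) (Fin (d l.castSucc)) ℝ)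
    (hU : ∀ l, specNorm (U l) ≤ (1 / (n : ℝ)) * specNorm (W l))
    (B : ℝ)
    (x : Fin (d 0) → ℝ) (hx : vnorm x ≤ B)
    (i j : Fin (d (Fin.last n))) :
    |(reluNet n d (fun l => W l + U l) x i - reluNet n d (fun l => W l + U l) x j) -
        (reluNet n d W x i - reluNet n d W x j)| ≤
      2 * Real.exp 1 * B * (∏ l, specNorm (W l)) *
        ∑ l, specNorm (U l) / specNorm (W l) := by
  have hprod := prod_add_sub_prod_le (fun l => specNorm (W l)) (fun l => specNorm (U l))
    (fun l => specNorm_nonneg _) (fun l => specNorm_nonneg _) (by simpa using hU)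
  have hbound_nonneg : 0 ≤ Real.exp 1 * (∏ l, specNorm (W l)) *
      ∑ l, specNorm (U l) / specNorm (W l) := by
    refine mul_nonneg (mul_nonneg (Real.exp_pos 1).le ?_) ?_
    · exact Finset.prod_nonneg fun l _ => specNorm_nonneg _
    · exact Finset.sum_nonneg fun l _ => div_nonneg (specNorm_nonneg _) (specNorm_nonneg _)
  calc _ ≤ 2 * vnorm (reluNet n d (fun l => W l + U l) x - reluNet n d W x) :=
        abs_sub_sub_sub_le_two_mul_vnorm _ _ i j
    _ ≤ 2 * ((∏ l, (specNorm (W l) + specNorm (U l)) - ∏ l, specNorm (W l)) * vnorm x) :=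
        mul_le_mul_of_nonneg_left (vnorm_reluNet_add_sub_le n d W U x) zero_le_two
    _ ≤ 2 * ((Real.exp 1 * (∏ l, specNorm (W l)) *
          ∑ l, specNorm (U l) / specNorm (W l)) * B) :=
        mul_le_mul_of_nonneg_left (mul_le_mul hprod hx (vnorm_nonneg x) hbound_nonneg)
          zero_le_two
    _ = _ := by ring

/-- margin-operator perturbation bound, Lemma A.2 part 1: if every
`W_l ≠ 0`, `‖U_l‖₂ ≤ (1/n)‖W_l‖₂`, `B > 0` and `‖x‖₂ ≤ B`, then for all output
indices `i, j`,
`|M(f_{W+U}(x), i, j) - M(f_W(x), i, j)| ≤ 2e·B·(∏_l ‖W_l‖₂)·∑_l ‖U_l‖₂/‖W_l‖₂`,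
where `M(v, i, j) = v_i - v_j`. -/
theorem margin_reluNet_perturb_le {n : ℕ} (hn : 1 ≤ n) (d : Fin (n + 1) → ℕ)
    (W U : (l : Fin n) → Matrix (Fin (d l.succ)) (Fin (d l.castSucc)) ℝ)
    (hW : ∀ l, W l ≠ 0)
    (hU : ∀ l, specNorm (U l) ≤ (1 / (n : ℝ)) * specNorm (W l))
    (B : ℝ) (hB : 0 < B)
    (x : Fin (d 0) → ℝ) (hx : vnorm x ≤ B)
    (i j : Fin (d (Fin.last n))) :
    |(reluNet n d (fun l => W l + U l) x i - reluNet n d (fun l => W l + U l) x j) -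
        (reluNet n d W x i - reluNet n d W x j)| ≤
      2 * Real.exp 1 * B * (∏ l, specNorm (W l)) *
        ∑ l, specNorm (U l) / specNorm (W l) :=
  margin_reluNet_perturb_le_general d W U hU B x hx i j
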